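/- arXiv:2312.08286 — 7 statements merged into one kernel-verified Lean document; each statement's English description precedes it below -/
import Mathlib

section
/- Let S be a compact metric space, λ a Borel probability measure на S with full support, and γ : S × S × C(S) → [0,∞) a continuous bounded map satisfying sign-preservation: for all s, s' ∈ S and ρ ∈ C(S), γ(s,s',ρ) > 0 if and only if ρ(s') > ρ(s). For μ a Borel probability measure on S and ρ ∈ C(S), define the pairwise comparison signed set function v(μ,ρ) on Borel sets B by v(μ,ρ)(B) = ∫_S ∫_B γ(s,s',ρ) dλ(s') dμ(s) − ∫_S ∫_B γ(s',s,ρ) dμ(s') dλ(s). Then v(μ,ρ)(B) = 0 for every Borel set B if and only if ∫_S ρ dν ≤ ∫_S ρ dμ for every Borel probability measure ν on S. -/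
open MeasureTheory

lemma cont_int_aux {S : Type*} [MetricSpace S] [CompactSpace S] [MeasurableSpace S]
    [BorelSpace S] {f : S → ℝ} (hf : Continuous f) (μ : Measure S) [IsFiniteMeasure μ] :
    Integrable f μ := by
  rw [← integrableOn_univ]
  exact hf.continuousOn.integrableOn_compact isCompact_univ

lemma cont_int_prod_aux {S : Type*} [MetricSpace S] [CompactSpace S] [MeasurableSpace S]
    [BorelSpace S] {f : S × S → ℝ} (hf : Continuous f) (μ ν : Measure S)
    [IsFiniteMeasure μ] [IsFiniteMeasure ν] :
    Integrable f (μ.prod ν) := by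
  rw [← integrableOn_univ]
  exact hf.continuousOn.integrableOn_compact isCompact_univ

/-- Nash stationarity of the pairwise comparison dynamics map with a continuous,
bounded, sign-preserving conditional switch rate `γ` and a full-support reference
probability measure `lam`: `v(μ,ρ)` vanishes on every Borel set if and only if
`∫ ρ dν ≤ ∫ ρ dμ` for every Borel probability measure `ν`. -/
theorem pairwise_comparison_nash_stationary {S : Type*} [MetricSpace S] [CompactSpace S]
    [MeasurableSpace S] [BorelSpace S]
    (lam : Measure S) [IsProbabilityMeasure lam]
    (hfull : ∀ U : Set S, IsOpen U → U.Nonempty → 0 < lam U)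
    (γ : S → S → C(S, ℝ) → ℝ)
    (hγcont : Continuous fun p : S × S × C(S, ℝ) => γ p.1 p.2.1 p.2.2)
    (hγnonneg : ∀ (s s' : S) (ρ : C(S, ℝ)), 0 ≤ γ s s' ρ)
    (hγbdd : ∃ M : ℝ, ∀ (s s' : S) (ρ : C(S, ℝ)), γ s s' ρ ≤ M)
    (hsign : ∀ (s s' : S) (ρ : C(S, ℝ)), 0 < γ s s' ρ ↔ ρ s < ρ s')
    (μ : Measure S) [IsProbabilityMeasure μ] (ρ : C(S, ℝ)) :
    (∀ B : Set S, MeasurableSet B →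
        (∫ s, (∫ s' in B, γ s s' ρ ∂lam) ∂μ)
          - (∫ s, (∫ s' in B, γ s' s ρ ∂μ) ∂lam) = 0) ↔
      ∀ ν : Measure S, IsProbabilityMeasure ν →
        ∫ s, ρ s ∂ν ≤ ∫ s, ρ s ∂μ := by
  classical
  -- S is nonempty
  have hne : Nonempty S := by
    by_contra h
    rw [not_nonempty_iff] at h
    have h1 : lam Set.univ = 1 := measure_univ
    rw [Set.univ_eq_empty_iff.mpr h, measure_empty] at h1
    exact zero_ne_one h1
  set g : S → S → ℝ := fun s s' => γ s s' ρ with hgdef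
  have hgcont : Continuous fun p : S × S => g p.1 p.2 := by
    have : (fun p : S × S => g p.1 p.2)
        = (fun p : S × S × C(S, ℝ) => γ p.1 p.2.1 p.2.2) ∘ (fun p : S × S => (p.1, p.2, ρ)) :=
      rfl
    rw [this]
    exact hγcont.comp (by fun_prop)
  have hgc1 : ∀ s : S, Continuous (g s) := fun s => hgcont.comp (Continuous.prodMk_right s)
  have hgnn : ∀ s s', 0 ≤ g s s' := fun s s' => hγnonneg s s' ρ
  have hgzero : ∀ s s', ρ s' ≤ ρ s → g s s' = 0 := by
    intro s s' hle
    refine le_antisymm ?_ (hgnn s s')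
    by_contra hgt
    push_neg at hgt
    exact absurd ((hsign s s' ρ).mp hgt) (not_lt.mpr hle)
  -- maximum of ρ
  obtain ⟨s0, -, hs0'⟩ := isCompact_univ.exists_isMaxOn Set.univ_nonempty ρ.continuous.continuousOn
  have hs0 : ∀ s : S, ρ s ≤ ρ s0 := fun s => hs0' (Set.mem_univ s)
  set Mx : ℝ := ρ s0 with hMx
  constructor
  · -- forward direction
    intro h ν hν
    have hkey : μ {s | ρ s < Mx} = 0 := by
      by_contra hpos
      -- find c < Mx with μ {ρ ≤ c} ≠ 0
      have hU : {s | ρ s < Mx} = ⋃ n : ℕ, {s | ρ s ≤ Mx - 1 / (n + 1)} := by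
        ext s
        simp only [Set.mem_setOf_eq, Set.mem_iUnion]
        constructor
        · intro hs
          obtain ⟨n, hn⟩ := exists_nat_one_div_lt (sub_pos.mpr hs)
          exact ⟨n, by push_cast at hn ⊢; linarith⟩
        · rintro ⟨n, hn⟩
          have h0 : (0 : ℝ) < 1 / (n + 1) := by positivity
          linarith
      have hc' : ∃ n : ℕ, μ {s | ρ s ≤ Mx - 1 / (n + 1)} ≠ 0 := by
        by_contra h'
        push_neg at h'
        exact hpos (hU ▸ measure_iUnion_null h')
      obtain ⟨n, hμc⟩ := hc'
      set c : ℝ := Mx - 1 / (n + 1) with hcdef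
      have hc : c < Mx := by
        have h0 : (0 : ℝ) < 1 / (n + 1 : ℝ) := by positivity
        simp only [hcdef]
        linarith
      set B : Set S := {s | c < ρ s} with hBdef
      have hBopen : IsOpen B := isOpen_lt continuous_const ρ.continuous
      have hBmeas : MeasurableSet B := hBopen.measurableSet
      have hBne : B.Nonempty := ⟨s0, hc⟩
      have hlamB : 0 < lam B := hfull B hBopen hBne
      have hBc : Bᶜ = {s | ρ s ≤ c} := by
        ext s
        simp [hBdef, not_lt]
      set F : S → ℝ := fun s => ∫ s' in B, g s s' ∂lam with hFdef
      set f : S → ℝ := fun s => ∫ s', g s s' ∂lam with hfdef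
      have hFnn : ∀ s, 0 ≤ F s := fun s => integral_nonneg fun s' => hgnn s s'
      have hFpos : ∀ s ∈ Bᶜ, 0 < F s := by
        intro s hs
        rw [hBc] at hs
        rw [hFdef]
        rw [setIntegral_pos_iff_support_of_nonneg_ae
            (Filter.Eventually.of_forall fun x => hgnn s x)
            ((cont_int_aux (hgc1 s) lam).integrableOn)]
        refine lt_of_lt_of_le hlamB (measure_mono fun x hx => ⟨?_, hx⟩)
        have hx' : c < ρ x := hx
        have : 0 < g s x := (hsign s x ρ).mpr (lt_of_le_of_lt hs hx')
        exact ne_of_gt this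
      have hFint : Integrable F μ := by
        have := (cont_int_prod_aux hgcont μ (lam.restrict B)).integral_prod_left
        exact this
      -- on B, F = f
      have hFf : ∀ s ∈ B, F s = f s := by
        intro s hs
        have hsplit := integral_add_compl hBmeas (cont_int_aux (hgc1 s) lam)
        have hzero : ∫ s' in Bᶜ, g s s' ∂lam = 0 := by
          have heq : Set.EqOn (g s) 0 Bᶜ := by
            intro s' hs'
            rw [hBc] at hs'
            exact hgzero s s' (le_of_lt (lt_of_le_of_lt hs' hs))
          rw [setIntegral_congr_fun hBmeas.compl heq]; simp
        simp only [hFdef, hfdef]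
        linarith [hsplit]
      -- Fubini on the second term
      have hswap : (∫ s, (∫ s' in B, γ s' s ρ ∂μ) ∂lam) = ∫ s' in B, f s' ∂μ := by
        have hI : Integrable (Function.uncurry fun s s' => g s' s)
            (lam.prod (μ.restrict B)) := by
          apply cont_int_prod_aux
          exact hgcont.comp continuous_swap
        exact integral_integral_swap hI
      have hv := h B hBmeas
      rw [hswap] at hv
      have hdecomp := integral_add_compl hBmeas hFint
      have hB' : ∫ s in B, F s ∂μ = ∫ s' in B, f s' ∂μ :=
        setIntegral_congr_fun hBmeas hFf
      -- so v(B) = ∫_{Bᶜ} F dμ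
      have hvB : ∫ s in Bᶜ, F s ∂μ = 0 := by
        have : (∫ s, F s ∂μ) = ∫ s' in B, f s' ∂μ := by
          simp only [hFdef] at hv ⊢
          linarith [hv]
        linarith [hdecomp, hB']
      -- but ∫_{Bᶜ} F dμ > 0
      have hpos' : 0 < ∫ s in Bᶜ, F s ∂μ := by
        rw [setIntegral_pos_iff_support_of_nonneg_ae
            (Filter.Eventually.of_forall hFnn) hFint.integrableOn]
        have hsub : Bᶜ ⊆ Function.support F ∩ Bᶜ :=
          fun x hx => ⟨ne_of_gt (hFpos x hx), hx⟩
        refine lt_of_lt_of_le ?_ (measure_mono hsub)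
        rw [pos_iff_ne_zero, hBc]
        exact hμc
      linarith
    -- conclude
    have haeμ : ρ =ᵐ[μ] fun _ => Mx := by
      have hsub : {s | ρ s ≠ Mx} ⊆ {s | ρ s < Mx} :=
        fun s hs => lt_of_le_of_ne (hs0 s) hs
      exact measure_mono_null hsub hkey
    have hμint : ∫ s, ρ s ∂μ = Mx := by
      rw [integral_congr_ae haeμ]
      simp
    rw [hμint]
    calc ∫ s, ρ s ∂ν ≤ ∫ _, Mx ∂ν :=
          integral_mono (cont_int_aux ρ.continuous ν) (integrable_const Mx) hs0
      _ = Mx := by simp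
  · -- backward direction
    intro h B hB
    set I : ℝ := ∫ s, ρ s ∂μ with hIdef
    have hub : ∀ s : S, ρ s ≤ I := by
      intro s
      have := h (Measure.dirac s) (by infer_instance)
      rwa [integral_dirac] at this
    have hae : ∀ᵐ s ∂μ, ρ s = I := by
      have hnn : 0 ≤ fun s => I - ρ s := fun s => sub_nonneg.mpr (hub s)
      have hint : Integrable (fun s => I - ρ s) μ :=
        (integrable_const I).sub (cont_int_aux ρ.continuous μ)
      have hz : ∫ s, (I - ρ s) ∂μ = 0 := by
        rw [integral_sub (integrable_const I) (cont_int_aux ρ.continuous μ)]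
        simp [hIdef]
      have := (integral_eq_zero_iff_of_nonneg hnn hint).mp hz
      filter_upwards [this] with s hs
      have : I - ρ s = 0 := hs
      linarith
    have h1 : ∫ s, (∫ s' in B, γ s s' ρ ∂lam) ∂μ = 0 := by
      have : (fun s => ∫ s' in B, γ s s' ρ ∂lam) =ᵐ[μ] fun _ => (0 : ℝ) := by
        filter_upwards [hae] with s hs
        have hz : ∀ s', g s s' = 0 := fun s' => hgzero s s' (hs ▸ hub s')
        simp only [hgdef] at hz
        simp [hz]
      rw [integral_congr_ae this, integral_zero]
    have h2 : ∀ s : S, ∫ s' in B, γ s' s ρ ∂μ = 0 := by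
      intro s
      have : (fun s' => γ s' s ρ) =ᵐ[μ.restrict B] fun _ => (0 : ℝ) := by
        filter_upwards [ae_restrict_of_ae hae] with s' hs'
        exact hgzero s' s (by rw [hs']; exact hub s)
      rw [integral_congr_ae this, integral_zero]
    simp only [h1, h2, integral_zero, sub_zero]
end

section
/- Let S be a compact metric space, F : P(S) → C(S) a population game, and μ ∈ P(S) a globally evolutionarily stable state of F. If for every ν ∈ P(S) the score function h^F_{ν:μ} is right-continuous at 0, then NE(F) = {μ}, i.e. μ is the unique Nash equilibrium of F. -/
open MeasureTheory

/-- The convex combination `(1-η)•μ + η•ν` of two Borel measures. -/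
noncomputable def mix {S : Type*} [MeasurableSpace S] (μ ν : Measure S) (η : ℝ) : Measure S :=
  ENNReal.ofReal (1 - η) • μ + ENNReal.ofReal η • ν

/-- The score function `h^F_{ν:μ}(η) = E_F(ν,(1-η)μ+ην) - E_F(μ,(1-η)μ+ην)`. -/
noncomputable def score {S : Type*} [MetricSpace S] [MeasurableSpace S]
    (F : Measure S → C(S, ℝ)) (μ ν : Measure S) (η : ℝ) : ℝ :=
  (∫ s, F (mix μ ν η) s ∂ν) - ∫ s, F (mix μ ν η) s ∂μ

lemma mix_zero {S : Type*} [MeasurableSpace S] (μ ν : Measure S) : mix μ ν 0 = μ := by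
  simp [mix]

lemma integral_mix {S : Type*} [MetricSpace S] [CompactSpace S] [MeasurableSpace S] [BorelSpace S]
    (μ ν : Measure S) [IsFiniteMeasure μ] [IsFiniteMeasure ν] {η : ℝ} (h0 : 0 ≤ η) (h1 : η ≤ 1)
    (f : C(S,ℝ)) :
    ∫ s, f s ∂(mix μ ν η) = (1-η) * ∫ s, f s ∂μ + η * ∫ s, f s ∂ν := by
  have hiμ : Integrable f μ :=
    f.continuous.integrable_of_hasCompactSupport (HasCompactSupport.of_compactSpace _)
  have hiν : Integrable f ν :=
    f.continuous.integrable_of_hasCompactSupport (HasCompactSupport.of_compactSpace _)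
  rw [mix, integral_add_measure (hiμ.smul_measure (by simp)) (hiν.smul_measure (by simp)),
    integral_smul_measure, integral_smul_measure, ENNReal.toReal_ofReal (by linarith),
    ENNReal.toReal_ofReal h0]
  simp [smul_eq_mul]

lemma mix_prob {S : Type*} [MeasurableSpace S] (μ ν : Measure S)
    [IsProbabilityMeasure μ] [IsProbabilityMeasure ν] {η : ℝ} (h0 : 0 ≤ η) (h1 : η ≤ 1) :
    IsProbabilityMeasure (mix μ ν η) := by
  constructor
  simp [mix, ← ENNReal.ofReal_add (by linarith : (0:ℝ) ≤ 1 - η) h0]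

lemma mix_eq_self {S : Type*} [MeasurableSpace S] (μ ν : Measure S)
    [IsProbabilityMeasure μ] [IsProbabilityMeasure ν] {η : ℝ} (h0 : 0 < η) (h1 : η ≤ 1)
    (h : mix μ ν η = μ) : ν = μ := by
  ext A hA
  have hthis := congrArg (fun m : Measure S => m A) h
  simp only [mix, Measure.add_apply, Measure.smul_apply, smul_eq_mul] at hthis
  have hμA : μ A ≠ ⊤ := measure_ne_top μ A
  have hsplit : ENNReal.ofReal (1 - η) * μ A + ENNReal.ofReal η * μ A = μ A := by
    rw [← add_mul, ← ENNReal.ofReal_add (by linarith) h0.le]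
    simp
  nth_rewrite 2 [← hsplit] at hthis
  have hcancel : ENNReal.ofReal η * ν A = ENNReal.ofReal η * μ A :=
    WithTop.add_left_cancel (ENNReal.mul_ne_top ENNReal.ofReal_ne_top hμA) hthis
  exact (ENNReal.mul_right_inj (by simp [h0]) ENNReal.ofReal_ne_top).mp hcancel

/-- A globally evolutionarily stable state whose score functions are
right-continuous at `0` is the unique Nash equilibrium of the game. -/
theorem gess_unique_nash {S : Type*} [MetricSpace S] [CompactSpace S]
    [MeasurableSpace S] [BorelSpace S]
    (F : Measure S → C(S, ℝ)) (μ : Measure S) [IsProbabilityMeasure μ]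
    (hGESS : ∀ ν : Measure S, IsProbabilityMeasure ν → ν ≠ μ →
      ∫ s, F ν s ∂ν < ∫ s, F ν s ∂μ)
    (hrc : ∀ ν : Measure S, IsProbabilityMeasure ν →
      Filter.Tendsto (score F μ ν) (nhdsWithin 0 (Set.Ioi 0)) (nhds (score F μ ν 0))) :
    {ν : Measure S | IsProbabilityMeasure ν ∧
      ∀ π : Measure S, IsProbabilityMeasure π →
        ∫ s, F ν s ∂π ≤ ∫ s, F ν s ∂ν} = {μ} := by
  ext ρ
  simp only [Set.mem_setOf_eq, Set.mem_singleton_iff]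
  constructor
  · rintro ⟨hρ, hNE⟩
    by_contra hne
    exact absurd (hNE μ inferInstance) (not_le.2 (hGESS ρ hρ hne))
  · rintro rfl
    refine ⟨inferInstance, fun ν hν => ?_⟩
    by_cases hne : ν = ρ
    · rw [hne]
    · have key : ∀ η ∈ Set.Ioo (0:ℝ) 1, score F ρ ν η < 0 := by
        rintro η ⟨hη0, hη1⟩
        have hprob : IsProbabilityMeasure (mix ρ ν η) := mix_prob ρ ν hη0.le hη1.le
        have hπne : mix ρ ν η ≠ ρ := fun h => hne (mix_eq_self ρ ν hη0 hη1.le h)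
        have hG := hGESS (mix ρ ν η) hprob hπne
        rw [integral_mix ρ ν hη0.le hη1.le] at hG
        have h2 : η * (∫ s, F (mix ρ ν η) s ∂ν) < η * (∫ s, F (mix ρ ν η) s ∂ρ) := by
          linarith
        have h3 := lt_of_mul_lt_mul_left h2 hη0.le
        simp only [score]
        linarith
      have h0 : score F ρ ν 0 ≤ 0 := by
        refine le_of_tendsto (hrc ν hν) ?_
        filter_upwards [Ioo_mem_nhdsGT_of_mem
          (⟨le_refl (0:ℝ), one_pos⟩ : (0:ℝ) ∈ Set.Ico 0 1)] with η hη
        exact (key η hη).le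
      simp only [score, mix_zero] at h0
      linarith
end

section
/- Let S be a compact metric space and F : P(S) → C(S) a monotone population game. Then: (i) every Nash equilibrium of F is a globally neutrally stable state of F; (ii) every strict Nash equilibrium of F is a globally evolutionarily stable state of F; (iii) if F is strictly monotone, then every Nash equilibrium of F is a globally evolutionarily stable state of F. -/
open MeasureTheory

lemma my_integrable {S : Type*} [MetricSpace S] [CompactSpace S]
    [MeasurableSpace S] [BorelSpace S] (f : C(S, ℝ)) (μ : Measure S)
    [IsProbabilityMeasure μ] : Integrable (fun s => f s) μ :=
  f.continuous.integrable_of_hasCompactSupport (HasCompactSupport.of_compactSpace _)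

/-- In a monotone game: (i) every Nash equilibrium is a globally neutrally stable
state; (ii) every strict Nash equilibrium is a globally evolutionarily stable state;
(iii) if the game is strictly monotone, every Nash equilibrium is a globally
evolutionarily stable state. -/
theorem monotone_nash {S : Type*} [MetricSpace S] [CompactSpace S]
    [MeasurableSpace S] [BorelSpace S]
    (F : Measure S → C(S, ℝ))
    (hmono : ∀ μ ν : Measure S, IsProbabilityMeasure μ → IsProbabilityMeasure ν →
      (∫ s, (F μ s - F ν s) ∂μ) - ∫ s, (F μ s - F ν s) ∂ν ≤ 0) :
    (∀ μ : Measure S, IsProbabilityMeasure μ →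
      (∀ ν : Measure S, IsProbabilityMeasure ν → ∫ s, F μ s ∂ν ≤ ∫ s, F μ s ∂μ) →
      ∀ ν : Measure S, IsProbabilityMeasure ν → ∫ s, F ν s ∂ν ≤ ∫ s, F ν s ∂μ) ∧
    (∀ μ : Measure S, IsProbabilityMeasure μ →
      (∀ ν : Measure S, IsProbabilityMeasure ν → ν ≠ μ →
        ∫ s, F μ s ∂ν < ∫ s, F μ s ∂μ) →
      ∀ ν : Measure S, IsProbabilityMeasure ν → ν ≠ μ →
        ∫ s, F ν s ∂ν < ∫ s, F ν s ∂μ) ∧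
    ((∀ μ ν : Measure S, IsProbabilityMeasure μ → IsProbabilityMeasure ν → μ ≠ ν →
        (∫ s, (F μ s - F ν s) ∂μ) - ∫ s, (F μ s - F ν s) ∂ν < 0) →
      ∀ μ : Measure S, IsProbabilityMeasure μ →
        (∀ ν : Measure S, IsProbabilityMeasure ν → ∫ s, F μ s ∂ν ≤ ∫ s, F μ s ∂μ) →
        ∀ ν : Measure S, IsProbabilityMeasure ν → ν ≠ μ →
          ∫ s, F ν s ∂ν < ∫ s, F ν s ∂μ) := by
  have split : ∀ (f g : C(S, ℝ)) (P : Measure S), IsProbabilityMeasure P →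
      (∫ s, (f s - g s) ∂P) = (∫ s, f s ∂P) - ∫ s, g s ∂P := by
    intro f g P hP
    exact integral_sub (my_integrable f P) (my_integrable g P)
  refine ⟨?_, ?_, ?_⟩
  · intro μ hμ hnash ν hν
    have h := hmono ν μ hν hμ
    rw [split _ _ ν hν, split _ _ μ hμ] at h
    have h2 := hnash ν hν
    linarith
  · intro μ hμ hnash ν hν hne
    have h := hmono ν μ hν hμ
    rw [split _ _ ν hν, split _ _ μ hμ] at h
    have h2 := hnash ν hν hne
    linarith
  · intro hsm μ hμ hnash ν hν hne
    have h := hsm ν μ hν hμ hne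
    rw [split _ _ ν hν, split _ _ μ hμ] at h
    have h2 := hnash ν hν
    linarith
end

section
/- Let S be a compact metric space, F : P(S) → C(S) a monotone population game, and μ ∈ NE(F). Assume that for every ν ∈ P(S) the score function h^F_{ν:μ} is right-continuous at 0. If either μ is a strict Nash equilibrium of F or F is strictly monotone, then μ is the unique Nash equilibrium of F, i.e. NE(F) = {μ}. -/
open MeasureTheory

/-- Continuous maps on a compact space are integrable w.r.t. a probability measure. -/
lemma cm_integrable {S : Type*} [MetricSpace S] [CompactSpace S]
    [MeasurableSpace S] [BorelSpace S] (f : C(S, ℝ)) (π : Measure S)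
    [IsProbabilityMeasure π] : Integrable (fun s => f s) π :=
  f.continuous.integrable_of_hasCompactSupport (HasCompactSupport.of_compactSpace _)

/-- In a monotone game, a Nash equilibrium whose score functions are
right-continuous at `0` is the unique Nash equilibrium, provided either it is a
strict Nash equilibrium or the game is strictly monotone. -/
theorem monotone_unique_nash {S : Type*} [MetricSpace S] [CompactSpace S]
    [MeasurableSpace S] [BorelSpace S]
    (F : Measure S → C(S, ℝ)) (μ : Measure S) [IsProbabilityMeasure μ]
    (hmono : ∀ π ν : Measure S, IsProbabilityMeasure π → IsProbabilityMeasure ν →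
      (∫ s, (F π s - F ν s) ∂π) - ∫ s, (F π s - F ν s) ∂ν ≤ 0)
    (hμNE : ∀ ν : Measure S, IsProbabilityMeasure ν →
      ∫ s, F μ s ∂ν ≤ ∫ s, F μ s ∂μ)
    (hrc : ∀ ν : Measure S, IsProbabilityMeasure ν →
      Filter.Tendsto (score F μ ν) (nhdsWithin 0 (Set.Ioi 0)) (nhds (score F μ ν 0)))
    (hcase :
      (∀ ν : Measure S, IsProbabilityMeasure ν → ν ≠ μ →
          ∫ s, F μ s ∂ν < ∫ s, F μ s ∂μ) ∨
      (∀ π ν : Measure S, IsProbabilityMeasure π → IsProbabilityMeasure ν → π ≠ ν →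
          (∫ s, (F π s - F ν s) ∂π) - ∫ s, (F π s - F ν s) ∂ν < 0)) :
    {ν : Measure S | IsProbabilityMeasure ν ∧
      ∀ π : Measure S, IsProbabilityMeasure π →
        ∫ s, F ν s ∂π ≤ ∫ s, F ν s ∂ν} = {μ} := by
  ext ν
  simp only [Set.mem_setOf_eq, Set.mem_singleton_iff]
  constructor
  · rintro ⟨hν, hνNE⟩
    by_contra hne
    have hA : ∫ s, F ν s ∂μ ≤ ∫ s, F ν s ∂ν := hνNE μ inferInstance
    have hB : ∫ s, F μ s ∂ν ≤ ∫ s, F μ s ∂μ := hμNE ν hν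
    have hiν : ∀ π : Measure S, IsProbabilityMeasure π →
        (∫ s, (F ν s - F μ s) ∂π) = (∫ s, F ν s ∂π) - ∫ s, F μ s ∂π := by
      intro π hπ
      exact integral_sub (cm_integrable (F ν) π) (cm_integrable (F μ) π)
    have hm := hmono ν μ hν inferInstance
    rw [hiν ν hν, hiν μ inferInstance] at hm
    rcases hcase with hstrict | hsmono
    · have := hstrict ν hν hne
      linarith
    · have hm' := hsmono ν μ hν inferInstance hne
      rw [hiν ν hν, hiν μ inferInstance] at hm'
      linarith
  · rintro rfl
    exact ⟨inferInstance, hμNE⟩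
end

section
/- Let X be a real Banach space, τ a topology on X that is weaker than the norm topology, Y ⊆ X a τ-compact set, v : Y → X a map, and P ⊆ Y a τ-compact set. Suppose there exists a global Lyapunov function for P under v, i.e. a map V : Y → [0,∞) extending to a map V̄ : U → ℝ on a norm-open set U ⊇ Y such that V̄ is τ-continuous, V̄ is Fréchet differentiable, V̄(x) = 0 for all x ∈ P, V̄(x) > 0 for all x ∈ Y∖P, and DV̄(x)(v(x)) ≤ 0 for all x ∈ Y. Then P is τ-Lyapunov stable under v: for every relatively τ-open set Q ⊆ Y containing P there exists a relatively τ-open set R ⊆ Y containing P such that every solution x : [0,∞) → Y of the differential equation ẋ(t) = v(x(t)) (with derivatives taken in the norm of X) with x(0) ∈ R satisfies x(t) ∈ Q for all t ∈ [0,∞). -/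
lemma aux_antitone {f : ℝ → ℝ} {f' : ℝ → ℝ}
    (hf : ∀ s ∈ Set.Ici (0:ℝ), HasDerivWithinAt f (f' s) (Set.Ici 0) s)
    (hf' : ∀ s ∈ Set.Ici (0:ℝ), f' s ≤ 0) :
    AntitoneOn f (Set.Ici 0) := by
  have hderiv : ∀ s ∈ interior (Set.Ici (0:ℝ)), HasDerivAt f (f' s) s := by
    intro s hs
    rw [interior_Ici] at hs
    exact (hf s (Set.mem_Ici.mpr (le_of_lt (Set.mem_Ioi.mp hs)))).hasDerivAt (Ici_mem_nhds hs)
  refine antitoneOn_of_deriv_nonpos (convex_Ici 0)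
    (fun s hs => (hf s hs).continuousWithinAt)
    (fun s hs => (hderiv s hs).differentiableAt.differentiableWithinAt) ?_
  intro s hs
  rw [(hderiv s hs).deriv]
  rw [interior_Ici] at hs
  exact hf' s (Set.mem_Ici.mpr (Set.mem_Ioi.mp hs).le)


/-- A solution to the differential equation `ẋ(t) = v(x(t))` evolving in the set
`Y`, with derivatives taken in the norm of `X` (one-sided at `0`). -/
def IsSolution {X : Type*} [NormedAddCommGroup X] [NormedSpace ℝ X]
    (Y : Set X) (v : X → X) (x : ℝ → X) : Prop :=
  (∀ t : ℝ, 0 ≤ t → x t ∈ Y) ∧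
    ∀ t : ℝ, 0 ≤ t → HasDerivWithinAt x (v (x t)) (Set.Ici 0) t

/-- Existence of a global Lyapunov function for a `τ`-compact set `P ⊆ Y` implies
that `P` is `τ`-Lyapunov stable under `v`, where `τ` is a topology on the Banach
space `X` that is weaker than the norm topology and `Y ⊆ X` is `τ`-compact. -/
theorem lyapunov_stability {X : Type*} [NormedAddCommGroup X] [NormedSpace ℝ X]
    [CompleteSpace X]
    (Y P : Set X) (hPY : P ⊆ Y)
    (v : X → X)
    (U : Set X) (hU : IsOpen U) (hYU : Y ⊆ U)
    (Vbar : X → ℝ) (DV : X → (X →L[ℝ] ℝ))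
    (hVdiff : ∀ x ∈ U, HasFDerivAt Vbar (DV x) x)
    (hVzero : ∀ x ∈ P, Vbar x = 0)
    (hVpos : ∀ x ∈ Y \ P, 0 < Vbar x)
    (hVdec : ∀ x ∈ Y, DV x (v x) ≤ 0)
    (τ : TopologicalSpace X)
    (hτ : ∀ O : Set X, @IsOpen X τ O → @IsOpen X UniformSpace.toTopologicalSpace O)
    (hY : @IsCompact X τ Y) (hP : @IsCompact X τ P)
    (hVcont : @ContinuousOn X ℝ τ _ Vbar U) :
    ∀ Q : Set X, P ⊆ Q → (∃ O : Set X, @IsOpen X τ O ∧ Q = Y ∩ O) →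
      ∃ R : Set X, (∃ O : Set X, @IsOpen X τ O ∧ R = Y ∩ O) ∧ P ⊆ R ∧
        ∀ x : ℝ → X, IsSolution Y v x → x 0 ∈ R →
          ∀ t : ℝ, 0 ≤ t → x t ∈ Q := by
  intro Q hPQ hQrel
  obtain ⟨O, hO, hQO⟩ := hQrel
  -- the value of Vbar is nonincreasing along solutions
  have hsol : ∀ x : ℝ → X, IsSolution Y v x → ∀ t : ℝ, 0 ≤ t →
      Vbar (x t) ≤ Vbar (x 0) := by
    intro x hx t ht
    have hg : ∀ s ∈ Set.Ici (0:ℝ),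
        HasDerivWithinAt (fun s => Vbar (x s)) ((DV (x s)) (v (x s))) (Set.Ici 0) s := by
      intro s hs
      exact (hVdiff (x s) (hYU (hx.1 s hs))).comp_hasDerivWithinAt s (hx.2 s hs)
    have := aux_antitone hg (fun s hs => hVdec (x s) (hx.1 s hs))
    exact this Set.self_mem_Ici ht ht
  by_cases hne : (Y \ Q).Nonempty
  · -- minimum of Vbar on Y \ Q
    have hKsub : Y \ Q ⊆ Y := Set.diff_subset
    have hKcomp : @IsCompact X τ (Y \ Q) := by
      have : Y \ Q = Y ∩ Oᶜ := by
        rw [hQO]; ext w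
        simp only [Set.mem_diff, Set.mem_inter_iff, Set.mem_compl_iff]
        tauto
      rw [this]
      exact hY.inter_right ((@isClosed_compl_iff X τ O).mpr hO)
    obtain ⟨z, hzK, hzmin⟩ := hKcomp.exists_isMinOn hne
      (hVcont.mono (hKsub.trans hYU))
    set m := Vbar z with hm
    have hmpos : 0 < m := hVpos z ⟨hzK.1, fun hp => hzK.2 (hPQ hp)⟩
    -- for each p ∈ P find a τ-open neighborhood on which Vbar < m
    have key : ∀ p ∈ P, ∃ u : Set X, @IsOpen X τ u ∧ p ∈ u ∧
        u ∩ U ⊆ Vbar ⁻¹' Set.Iio m := by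
      intro p hp
      have hcw : @ContinuousWithinAt X ℝ τ _ Vbar U p := hVcont p (hYU (hPY hp))
      have hmem : Vbar ⁻¹' Set.Iio m ∈ @nhdsWithin X τ p U := by
        apply hcw
        rw [hVzero p hp]
        exact Iio_mem_nhds hmpos
      rw [@mem_nhdsWithin] at hmem
      obtain ⟨u, hu, hpu, husub⟩ := hmem
      exact ⟨u, hu, hpu, husub⟩
    choose u hu hpu husub using key
    set O' : Set X := ⋃ (p : X) (hp : p ∈ P), u p hp with hO'
    have hO'open : @IsOpen X τ O' :=
      @isOpen_iUnion X X τ _ (fun p => @isOpen_iUnion X _ τ _ (fun hp => hu p hp))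
    refine ⟨Y ∩ O', ⟨O', hO'open, rfl⟩, ?_, ?_⟩
    · intro p hp
      exact ⟨hPY hp, Set.mem_iUnion.mpr ⟨p, Set.mem_iUnion.mpr ⟨hp, hpu p hp⟩⟩⟩
    · intro x hx hx0 t ht
      have hx0m : Vbar (x 0) < m := by
        obtain ⟨hxY, hxO'⟩ := hx0
        obtain ⟨p, hpmem⟩ := Set.mem_iUnion.mp hxO'
        obtain ⟨hp, hxu⟩ := Set.mem_iUnion.mp hpmem
        exact husub p hp ⟨hxu, hYU hxY⟩
      have hxt : Vbar (x t) < m := lt_of_le_of_lt (hsol x hx t ht) hx0m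
      by_contra hxQ
      exact absurd (hzmin ⟨hx.1 t ht, hxQ⟩) (not_le.mpr hxt)
  · -- Y ⊆ Q, take R = Q
    refine ⟨Q, ⟨O, hO, hQO⟩, hPQ, ?_⟩
    intro x hx _ t ht
    have hYQ : Y ⊆ Q := by
      intro w hw
      by_contra hwQ
      exact hne ⟨w, hw, hwQ⟩
    exact hYQ (hx.1 t ht)
end

section
/- Let X be a real Banach space, τ a topology on X that is weaker than the norm topology, Y ⊆ X a τ-compact set, v : Y → X a map, and P ⊆ Y a τ-compact set. Suppose that for every x₀ ∈ Y there exists a unique solution x : [0,∞) → Y of the differential equation ẋ(t) = v(x(t)) with x(0) = x₀. Suppose further there exists a strict global Lyapunov function for P under v: a map V : Y → [0,∞) extending to a map V̄ : U → ℝ on a norm-open set U ⊇ Y such that V̄ is τ-continuous, V̄ is Fréchet differentiable, V̄(x) = 0 for all x ∈ P, V̄(x) > 0 for all x ∈ Y∖P, DV̄(x)(v(x)) ≤ 0 for all x ∈ Y, the map x ↦ DV̄(x)(v(x)) is τ-continuous on Y, and DV̄(x)(v(x)) < 0 for all x ∈ Y∖P. Then P is globally τ-attracting under v: for every x₀ ∈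 Y, every relatively τ-open set Q ⊆ Y containing P, and every solution x : [0,∞) → Y of ẋ(t) = v(x(t)) with x(0) = x₀, there exists T ∈ [0,∞) such that x(t) ∈ Q for all t ∈ [T,∞). -/
/-- A closed superlevel set inside a compact set is compact. -/
lemma isCompact_superlevel {X : Type*} [TopologicalSpace X] {Y : Set X} (hY : IsCompact Y)
    {f : X → ℝ} (hf : ContinuousOn f Y) (m : ℝ) :
    IsCompact {x ∈ Y | m ≤ f x} := by
  haveI : CompactSpace Y := isCompact_iff_compactSpace.mp hY
  have hcl : IsClosed {y : Y | m ≤ Y.restrict f y} :=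
    isClosed_le continuous_const hf.restrict
  have himg := hcl.isCompact.image continuous_subtype_val
  convert himg using 1
  ext z
  constructor
  · rintro ⟨hzY, hzf⟩
    exact ⟨⟨z, hzY⟩, hzf, rfl⟩
  · rintro ⟨⟨w, hw⟩, hwf, rfl⟩
    exact ⟨hw, hwf⟩

lemma antitone_aux {g g' : ℝ → ℝ}
    (hg : ∀ t, 0 ≤ t → HasDerivWithinAt g (g' t) (Set.Ici 0) t)
    (hg' : ∀ t, 0 ≤ t → g' t ≤ 0) : AntitoneOn g (Set.Ici 0) := by
  apply antitoneOn_of_hasDerivWithinAt_nonpos (f' := g') (convex_Ici 0)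
    (fun t ht => (hg t ht).continuousWithinAt)
  · intro t ht
    rw [interior_Ici] at ht ⊢
    exact (hg t ht.le).mono (Set.Ioi_subset_Ici_self)
  · intro t ht
    rw [interior_Ici] at ht
    exact hg' t ht.le

lemma decay_aux {g g' : ℝ → ℝ} {ε : ℝ}
    (hg : ∀ t, 0 ≤ t → HasDerivWithinAt g (g' t) (Set.Ici 0) t)
    (hg' : ∀ t, 0 ≤ t → g' t ≤ -ε) :
    ∀ t, 0 ≤ t → g t ≤ g 0 - ε * t := by
  have hlin : ∀ t : ℝ, HasDerivWithinAt (fun s : ℝ => ε * s) ε (Set.Ici 0) t := by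
    intro t
    simpa using (hasDerivWithinAt_id t (Set.Ici 0)).const_mul ε
  have hA : AntitoneOn (fun s => g s + ε * s) (Set.Ici 0) := by
    apply antitone_aux (g' := fun t => g' t + ε)
    · exact fun t ht => (hg t ht).add (hlin t)
    · intro t ht; have := hg' t ht; linarith
  intro t ht
  have := hA (Set.self_mem_Ici) ht ht
  simp only [mul_zero, add_zero] at this
  linarith




/-- If solutions exist and are unique and there is a strict global Lyapunov
function for the `τ`-compact set `P ⊆ Y` under `v`, then `P` is globally
`τ`-attracting under `v`, where `τ` is a topology on the Banach space `X` that is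
weaker than the norm topology and `Y ⊆ X` is `τ`-compact. -/
theorem strict_lyapunov_attracting {X : Type*} [NormedAddCommGroup X] [NormedSpace ℝ X]
    [CompleteSpace X]
    (Y P : Set X) (hPY : P ⊆ Y)
    (v : X → X)
    (hexist : ∀ x₀ ∈ Y, ∃ x : ℝ → X, IsSolution Y v x ∧ x 0 = x₀)
    (huniq : ∀ x₁ x₂ : ℝ → X, IsSolution Y v x₁ → IsSolution Y v x₂ →
      x₁ 0 = x₂ 0 → ∀ t : ℝ, 0 ≤ t → x₁ t = x₂ t)
    (U : Set X) (hU : IsOpen U) (hYU : Y ⊆ U)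
    (Vbar : X → ℝ) (DV : X → (X →L[ℝ] ℝ))
    (hVdiff : ∀ x ∈ U, HasFDerivAt Vbar (DV x) x)
    (hVzero : ∀ x ∈ P, Vbar x = 0)
    (hVpos : ∀ x ∈ Y \ P, 0 < Vbar x)
    (hVdec : ∀ x ∈ Y, DV x (v x) ≤ 0)
    (hVstrict : ∀ x ∈ Y \ P, DV x (v x) < 0)
    (τ : TopologicalSpace X)
    (hτ : ∀ O : Set X, @IsOpen X τ O → @IsOpen X UniformSpace.toTopologicalSpace O)
    (hY : @IsCompact X τ Y) (hP : @IsCompact X τ P)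
    (hVcont : @ContinuousOn X ℝ τ _ Vbar U)
    (hDVcont : @ContinuousOn X ℝ τ _ (fun x => DV x (v x)) Y) :
    ∀ x₀ ∈ Y, ∀ Q : Set X, P ⊆ Q → (∃ O : Set X, @IsOpen X τ O ∧ Q = Y ∩ O) →
      ∀ x : ℝ → X, IsSolution Y v x → x 0 = x₀ →
        ∃ T : ℝ, 0 ≤ T ∧ ∀ t : ℝ, T ≤ t → x t ∈ Q := by
  rintro x₀ hx₀ Q hPQ ⟨O, hO, rfl⟩ x hsol hx0
  obtain ⟨hmem, hderiv⟩ := hsol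
  -- the derivative of t ↦ Vbar (x t)
  have hg : ∀ t : ℝ, 0 ≤ t →
      HasDerivWithinAt (fun t => Vbar (x t)) (DV (x t) (v (x t))) (Set.Ici 0) t :=
    fun t ht => (hVdiff (x t) (hYU (hmem t ht))).comp_hasDerivWithinAt t (hderiv t ht)
  -- t ↦ Vbar (x t) is antitone on [0, ∞)
  have hanti : AntitoneOn (fun t => Vbar (x t)) (Set.Ici 0) :=
    antitone_aux hg (fun t ht => hVdec (x t) (hmem t ht))
  by_cases hKne : (Y \ O).Nonempty
  · -- minimum of Vbar on the compact set Y \ O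
    have hKU : Y \ O ⊆ U := Set.diff_subset.trans hYU
    obtain ⟨w, hwK, hwmin⟩ := (hY.diff hO).exists_isMinOn hKne (hVcont.mono hKU)
    have hwP : w ∉ P := fun hp => hwK.2 (hPQ hp).2
    have hm : 0 < Vbar w := hVpos w ⟨hwK.1, hwP⟩
    -- the trajectory eventually has Vbar value below the minimum m = Vbar w
    have key : ∃ t₀ : ℝ, 0 ≤ t₀ ∧ Vbar (x t₀) < Vbar w := by
      by_contra hcon
      push_neg at hcon
      -- the compact superlevel set
      set K' : Set X := {y ∈ Y | Vbar w ≤ Vbar y} with hK'def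
      have hK' : @IsCompact X τ K' := isCompact_superlevel hY (hVcont.mono hYU) _
      have hK'ne : K'.Nonempty := ⟨x 0, hmem 0 le_rfl, hcon 0 le_rfl⟩
      have hK'Y : K' ⊆ Y := fun y hy => hy.1
      obtain ⟨z, hzK', hzmax⟩ := hK'.exists_isMaxOn hK'ne (hDVcont.mono hK'Y)
      have hzP : z ∉ P := fun hp => by
        have := hVzero z hp
        have := hzK'.2
        linarith
      have hε : DV z (v z) < 0 := hVstrict z ⟨hzK'.1, hzP⟩
      set ε : ℝ := -(DV z (v z)) with hεdef
      have hεpos : 0 < ε := by simp [hεdef]; linarith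
      have hbound : ∀ t : ℝ, 0 ≤ t → DV (x t) (v (x t)) ≤ -ε := by
        intro t ht
        have : DV (x t) (v (x t)) ≤ DV z (v z) := hzmax ⟨hmem t ht, hcon t ht⟩
        simpa [hεdef] using this
      have hdecay := decay_aux hg hbound
      set t₁ : ℝ := (Vbar (x 0) - Vbar w) / ε + 1 with ht₁def
      have h0 : Vbar w ≤ Vbar (x 0) := hcon 0 le_rfl
      have ht₁nn : 0 ≤ t₁ := by
        have : 0 ≤ (Vbar (x 0) - Vbar w) / ε := div_nonneg (by linarith) hεpos.le
        rw [ht₁def]; linarith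
      have h1 := hdecay t₁ ht₁nn
      have h2 : Vbar w ≤ Vbar (x t₁) := hcon t₁ ht₁nn
      have h3 : ε * t₁ = (Vbar (x 0) - Vbar w) + ε := by
        rw [ht₁def, mul_add, mul_one, mul_div_cancel₀ _ hεpos.ne']
      linarith
    obtain ⟨t₀, ht₀, hlt⟩ := key
    refine ⟨t₀, ht₀, fun t ht => ?_⟩
    have htnn : 0 ≤ t := ht₀.trans ht
    have hle : Vbar (x t) ≤ Vbar (x t₀) := hanti ht₀ htnn ht
    have hxtY : x t ∈ Y := hmem t htnn
    by_contra hnot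
    have hxtK : x t ∈ Y \ O := ⟨hxtY, fun hOmem => hnot ⟨hxtY, hOmem⟩⟩
    have : Vbar w ≤ Vbar (x t) := hwmin hxtK
    linarith
  · -- Y ⊆ O, so Y ∩ O = Y and the conclusion is trivial
    refine ⟨0, le_rfl, fun t ht => ?_⟩
    have hxtY : x t ∈ Y := hmem t ht
    exact ⟨hxtY, Set.diff_eq_empty.mp (Set.not_nonempty_iff_eq_empty.mp hKne) hxtY⟩
end

section
/- Let T > 0, V ∈ ℝ, and S = [0,T] ⊆ ℝ. Let Θ̃ : ℝ → ℝ be a Lipschitz continuous function with 0 ≤ Θ̃(x) ≤ 1 and Θ̃(x) + Θ̃(−x) = 1 for all x ∈ ℝ, and define f̃(s,s') := V·Θ̃(s−s') − min{s,s'}. Then the continuous war of attrition game F, defined by F(μ)(s) = ∫_S f̃(s,s') dμ(s'), is monotone: for all Borel probability measures μ, ν on S, ∫_S∫_S f̃(s,s') dμ(s') dμ(s) − ∫_S∫_S f̃(s,s') dν(s') dμ(s) − ∫_S∫_S f̃(s,s') dμ(s') dν(s) + ∫_S∫_S f̃(s,s') dν(s') dν(s) ≤ 0. -/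
open MeasureTheory Set ENNReal

namespace WarAux

private lemma integrable_of_bdd {α : Type*} [MeasurableSpace α] {μ : Measure α}
    [IsFiniteMeasure μ] {f : α → ℝ} (hm : AEStronglyMeasurable f μ) {C : ℝ}
    (h : ∀ x, |f x| ≤ C) : Integrable f μ :=
  ⟨hm, HasFiniteIntegral.of_bounded (ae_of_all _ fun x => by
    rw [Real.norm_eq_abs]; exact h x)⟩

variable {T : ℝ}

/-- indicator kernel -/
noncomputable def e (s : Set.Icc (0:ℝ) T) (t : ℝ) : ℝ≥0∞ := if t ≤ (s:ℝ) then 1 else 0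

lemma e_meas : Measurable (Function.uncurry fun (s : Set.Icc (0:ℝ) T) (t : ℝ) => e s t) := by
  unfold Function.uncurry e
  exact Measurable.ite (measurableSet_le measurable_snd
    (continuous_subtype_val.measurable.comp measurable_fst)) measurable_const measurable_const

lemma min_repr_pt (hT : 0 ≤ T) (s s' : Set.Icc (0:ℝ) T) :
    ENNReal.ofReal (min (s:ℝ) (s':ℝ)) = ∫⁻ t in Ioc (0:ℝ) T, e s t * e s' t := by
  have h1 : ∀ t : ℝ, e s t * e s' t = (Iic (min (s:ℝ) (s':ℝ))).indicator 1 t := by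
    intro t
    simp only [e, Set.indicator, mem_Iic, le_min_iff, Pi.one_apply]
    by_cases h : t ≤ (s:ℝ) <;> by_cases h' : t ≤ (s':ℝ) <;> simp [h, h']
  simp only [h1]
  rw [lintegral_indicator measurableSet_Iic]
  simp only [Pi.one_apply]
  rw [setLIntegral_one, Measure.restrict_apply measurableSet_Iic]
  have hset : Iic (min (s:ℝ) (s':ℝ)) ∩ Ioc 0 T = Ioc 0 (min (s:ℝ) (s':ℝ)) := by
    ext t
    simp only [mem_inter_iff, mem_Iic, mem_Ioc]
    constructor
    · rintro ⟨h1, h2, h3⟩; exact ⟨h2, h1⟩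
    · rintro ⟨h1, h2⟩
      exact ⟨h2, h1, h2.trans ((min_le_left _ _).trans s.2.2)⟩
  rw [hset, Real.volume_Ioc, sub_zero]


lemma meas_upper (t : ℝ) : MeasurableSet {s : Set.Icc (0:ℝ) T | t ≤ (s:ℝ)} :=
  measurableSet_le measurable_const continuous_subtype_val.measurable

lemma lint_e (κ : Measure (Set.Icc (0:ℝ) T)) (t : ℝ) :
    ∫⁻ s, e s t ∂κ = κ {s : Set.Icc (0:ℝ) T | t ≤ (s:ℝ)} := by
  have h : ∀ s : Set.Icc (0:ℝ) T,
      e s t = ({s : Set.Icc (0:ℝ) T | t ≤ (s:ℝ)}).indicator 1 s := by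
    intro s; simp only [e, Set.indicator, mem_setOf_eq, Pi.one_apply]
  simp only [h]
  rw [lintegral_indicator (meas_upper t)]
  simp only [Pi.one_apply]
  exact setLIntegral_one _

lemma e_meas_left (t : ℝ) : Measurable fun s : Set.Icc (0:ℝ) T => e s t :=
  e_meas.comp (measurable_id.prodMk measurable_const)

lemma min_repr (hT : 0 ≤ T) (μ ν : Measure (Set.Icc (0:ℝ) T))
    [IsProbabilityMeasure μ] [IsProbabilityMeasure ν] :
    ∫⁻ s, ∫⁻ s', ENNReal.ofReal (min (s:ℝ) (s':ℝ)) ∂ν ∂μ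
      = ∫⁻ t in Ioc (0:ℝ) T, μ {s : Set.Icc (0:ℝ) T | t ≤ (s:ℝ)}
          * ν {s : Set.Icc (0:ℝ) T | t ≤ (s:ℝ)} := by
  simp only [min_repr_pt hT]
  have step1 : ∀ s : Set.Icc (0:ℝ) T,
      ∫⁻ s', (∫⁻ t in Ioc (0:ℝ) T, e s t * e s' t) ∂ν
        = ∫⁻ t in Ioc (0:ℝ) T, e s t * ν {s' : Set.Icc (0:ℝ) T | t ≤ (s':ℝ)} := by
    intro s
    rw [lintegral_lintegral_swap]
    · refine lintegral_congr fun t => ?_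
      rw [lintegral_const_mul _ (e_meas_left t), lint_e]
    · apply Measurable.aemeasurable
      exact ((e_meas.comp ((measurable_const.prodMk measurable_snd))).mul
        (e_meas.comp (measurable_fst.prodMk measurable_snd)))
  simp only [step1]
  rw [lintegral_lintegral_swap]
  · refine lintegral_congr fun t => ?_
    rw [lintegral_mul_const _ (e_meas_left t)]
    rw [lint_e]
  · apply Measurable.aemeasurable
    refine (e_meas.comp (measurable_fst.prodMk measurable_snd)).mul ?_
    have hν : Measurable fun t : ℝ => ν {s' : Set.Icc (0:ℝ) T | t ≤ (s':ℝ)} :=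
      Antitone.measurable fun t1 t2 h12 => measure_mono fun x hx => le_trans h12 hx
    exact hν.comp measurable_snd


lemma meas_antitone (κ : Measure (Set.Icc (0:ℝ) T)) :
    Measurable fun t : ℝ => κ {s : Set.Icc (0:ℝ) T | t ≤ (s:ℝ)} :=
  Antitone.measurable fun t1 t2 h12 => measure_mono fun x hx => le_trans h12 hx

lemma min_real (hT : 0 ≤ T) (μ ν : Measure (Set.Icc (0:ℝ) T))
    [IsProbabilityMeasure μ] [IsProbabilityMeasure ν] :
    ∫ s, (∫ s', min (s:ℝ) (s':ℝ) ∂ν) ∂μ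
      = ∫ t in Ioc (0:ℝ) T, (μ {s : Set.Icc (0:ℝ) T | t ≤ (s:ℝ)}).toReal
          * (ν {s : Set.Icc (0:ℝ) T | t ≤ (s:ℝ)}).toReal := by
  have hcont : Continuous fun p : Set.Icc (0:ℝ) T × Set.Icc (0:ℝ) T =>
      min (p.1:ℝ) (p.2:ℝ) :=
    Continuous.min (continuous_subtype_val.comp continuous_fst)
      (continuous_subtype_val.comp continuous_snd)
  have hnn : ∀ s s' : Set.Icc (0:ℝ) T, 0 ≤ min (s:ℝ) (s':ℝ) :=
    fun s s' => le_min s.2.1 s'.2.1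
  have hum : Measurable (Function.uncurry fun (s s' : Set.Icc (0:ℝ) T) =>
      ENNReal.ofReal (min (s:ℝ) (s':ℝ))) :=
    ENNReal.measurable_ofReal.comp hcont.measurable
  have inner : ∀ s : Set.Icc (0:ℝ) T,
      ∫ s', min (s:ℝ) (s':ℝ) ∂ν = (∫⁻ s', ENNReal.ofReal (min (s:ℝ) (s':ℝ)) ∂ν).toReal := by
    intro s
    refine integral_eq_lintegral_of_nonneg_ae (ae_of_all _ fun s' => hnn s s') ?_
    exact (hcont.comp (Continuous.prodMk_right s)).aestronglyMeasurable
  simp only [inner]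
  rw [integral_toReal (hum.lintegral_prod_right).aemeasurable ?_]
  · rw [min_repr hT]
    rw [← integral_toReal ?_ ?_]
    · refine integral_congr_ae (ae_of_all _ fun t => ?_)
      simp only []
      exact ENNReal.toReal_mul
    · exact ((meas_antitone μ).mul (meas_antitone ν)).aemeasurable
    · refine ae_of_all _ fun t => ?_
      exact ENNReal.mul_lt_top (measure_lt_top μ _) (measure_lt_top ν _)
  · refine ae_of_all _ fun s => ?_
    calc ∫⁻ s', ENNReal.ofReal (min (s:ℝ) (s':ℝ)) ∂ν
        ≤ ∫⁻ _, ENNReal.ofReal T ∂ν := by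
          refine lintegral_mono fun s' => ENNReal.ofReal_le_ofReal ?_
          exact le_trans (min_le_right _ _) s'.2.2
      _ = ENNReal.ofReal T := by simp
      _ < ⊤ := ENNReal.ofReal_lt_top


lemma min_comb (hT : 0 ≤ T) (μ ν : Measure (Set.Icc (0:ℝ) T))
    [IsProbabilityMeasure μ] [IsProbabilityMeasure ν] :
    0 ≤ (∫ s, (∫ s', min (s:ℝ) (s':ℝ) ∂μ) ∂μ)
        - (∫ s, (∫ s', min (s:ℝ) (s':ℝ) ∂ν) ∂μ)
        - (∫ s, (∫ s', min (s:ℝ) (s':ℝ) ∂μ) ∂ν)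
        + (∫ s, (∫ s', min (s:ℝ) (s':ℝ) ∂ν) ∂ν) := by
  haveI : IsFiniteMeasure (volume.restrict (Ioc (0:ℝ) T)) :=
    ⟨by rw [Measure.restrict_apply_univ]; exact measure_Ioc_lt_top⟩
  rw [min_real hT μ μ, min_real hT μ ν, min_real hT ν μ, min_real hT ν ν]
  have hbd : ∀ (κ : Measure (Set.Icc (0:ℝ) T)) [IsProbabilityMeasure κ], ∀ t : ℝ,
      0 ≤ (κ {s : Set.Icc (0:ℝ) T | t ≤ (s:ℝ)}).toReal
        ∧ (κ {s : Set.Icc (0:ℝ) T | t ≤ (s:ℝ)}).toReal ≤ 1 := by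
    intro κ _ t
    refine ⟨ENNReal.toReal_nonneg, ?_⟩
    rw [show (1:ℝ) = (1:ℝ≥0∞).toReal by simp]
    exact ENNReal.toReal_mono one_ne_top prob_le_one
  have hint : ∀ (κ κ' : Measure (Set.Icc (0:ℝ) T)) [IsProbabilityMeasure κ]
      [IsProbabilityMeasure κ'],
      Integrable (fun t : ℝ => (κ {s : Set.Icc (0:ℝ) T | t ≤ (s:ℝ)}).toReal
        * (κ' {s : Set.Icc (0:ℝ) T | t ≤ (s:ℝ)}).toReal) (volume.restrict (Ioc (0:ℝ) T)) := by
    intro κ κ' _ _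
    refine integrable_of_bdd ?_ (C := 1) ?_
    · exact (((meas_antitone κ).ennreal_toReal).mul
        ((meas_antitone κ').ennreal_toReal)).aestronglyMeasurable
    · intro t
      have h1 := hbd κ t
      have h2 := hbd κ' t
      rw [abs_of_nonneg (mul_nonneg h1.1 h2.1)]
      calc _ ≤ 1 * 1 := mul_le_mul h1.2 h2.2 h2.1 zero_le_one
        _ = (1:ℝ) := by ring
  have h1 := hint μ μ; have h2 := hint μ ν; have h3 := hint ν μ; have h4 := hint ν ν
  have eC : (∫ t in Ioc (0:ℝ) T,
        ((μ {s : Set.Icc (0:ℝ) T | t ≤ (s:ℝ)}).toReal * (μ {s : Set.Icc (0:ℝ) T | t ≤ (s:ℝ)}).toReal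
        - (μ {s : Set.Icc (0:ℝ) T | t ≤ (s:ℝ)}).toReal * (ν {s : Set.Icc (0:ℝ) T | t ≤ (s:ℝ)}).toReal))
      = (∫ t in Ioc (0:ℝ) T, (μ {s : Set.Icc (0:ℝ) T | t ≤ (s:ℝ)}).toReal * (μ {s : Set.Icc (0:ℝ) T | t ≤ (s:ℝ)}).toReal)
        - (∫ t in Ioc (0:ℝ) T, (μ {s : Set.Icc (0:ℝ) T | t ≤ (s:ℝ)}).toReal * (ν {s : Set.Icc (0:ℝ) T | t ≤ (s:ℝ)}).toReal) :=
    integral_sub h1 h2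
  have eB : (∫ t in Ioc (0:ℝ) T,
        ((μ {s : Set.Icc (0:ℝ) T | t ≤ (s:ℝ)}).toReal * (μ {s : Set.Icc (0:ℝ) T | t ≤ (s:ℝ)}).toReal
        - (μ {s : Set.Icc (0:ℝ) T | t ≤ (s:ℝ)}).toReal * (ν {s : Set.Icc (0:ℝ) T | t ≤ (s:ℝ)}).toReal
        - (ν {s : Set.Icc (0:ℝ) T | t ≤ (s:ℝ)}).toReal * (μ {s : Set.Icc (0:ℝ) T | t ≤ (s:ℝ)}).toReal))
      = (∫ t in Ioc (0:ℝ) T,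
        ((μ {s : Set.Icc (0:ℝ) T | t ≤ (s:ℝ)}).toReal * (μ {s : Set.Icc (0:ℝ) T | t ≤ (s:ℝ)}).toReal
        - (μ {s : Set.Icc (0:ℝ) T | t ≤ (s:ℝ)}).toReal * (ν {s : Set.Icc (0:ℝ) T | t ≤ (s:ℝ)}).toReal))
        - (∫ t in Ioc (0:ℝ) T, (ν {s : Set.Icc (0:ℝ) T | t ≤ (s:ℝ)}).toReal * (μ {s : Set.Icc (0:ℝ) T | t ≤ (s:ℝ)}).toReal) :=
    integral_sub (h1.sub h2) h3
  have eA : (∫ t in Ioc (0:ℝ) T,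
        ((μ {s : Set.Icc (0:ℝ) T | t ≤ (s:ℝ)}).toReal * (μ {s : Set.Icc (0:ℝ) T | t ≤ (s:ℝ)}).toReal
        - (μ {s : Set.Icc (0:ℝ) T | t ≤ (s:ℝ)}).toReal * (ν {s : Set.Icc (0:ℝ) T | t ≤ (s:ℝ)}).toReal
        - (ν {s : Set.Icc (0:ℝ) T | t ≤ (s:ℝ)}).toReal * (μ {s : Set.Icc (0:ℝ) T | t ≤ (s:ℝ)}).toReal
        + (ν {s : Set.Icc (0:ℝ) T | t ≤ (s:ℝ)}).toReal * (ν {s : Set.Icc (0:ℝ) T | t ≤ (s:ℝ)}).toReal))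
      = (∫ t in Ioc (0:ℝ) T,
        ((μ {s : Set.Icc (0:ℝ) T | t ≤ (s:ℝ)}).toReal * (μ {s : Set.Icc (0:ℝ) T | t ≤ (s:ℝ)}).toReal
        - (μ {s : Set.Icc (0:ℝ) T | t ≤ (s:ℝ)}).toReal * (ν {s : Set.Icc (0:ℝ) T | t ≤ (s:ℝ)}).toReal
        - (ν {s : Set.Icc (0:ℝ) T | t ≤ (s:ℝ)}).toReal * (μ {s : Set.Icc (0:ℝ) T | t ≤ (s:ℝ)}).toReal))
        + (∫ t in Ioc (0:ℝ) T, (ν {s : Set.Icc (0:ℝ) T | t ≤ (s:ℝ)}).toReal * (ν {s : Set.Icc (0:ℝ) T | t ≤ (s:ℝ)}).toReal) :=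
    integral_add ((h1.sub h2).sub h3) h4
  have key : (0:ℝ) ≤ ∫ t in Ioc (0:ℝ) T,
        ((μ {s : Set.Icc (0:ℝ) T | t ≤ (s:ℝ)}).toReal * (μ {s : Set.Icc (0:ℝ) T | t ≤ (s:ℝ)}).toReal
        - (μ {s : Set.Icc (0:ℝ) T | t ≤ (s:ℝ)}).toReal * (ν {s : Set.Icc (0:ℝ) T | t ≤ (s:ℝ)}).toReal
        - (ν {s : Set.Icc (0:ℝ) T | t ≤ (s:ℝ)}).toReal * (μ {s : Set.Icc (0:ℝ) T | t ≤ (s:ℝ)}).toReal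
        + (ν {s : Set.Icc (0:ℝ) T | t ≤ (s:ℝ)}).toReal * (ν {s : Set.Icc (0:ℝ) T | t ≤ (s:ℝ)}).toReal) := by
    refine integral_nonneg fun t => ?_
    simp only [Pi.zero_apply]
    nlinarith [sq_nonneg ((μ {s : Set.Icc (0:ℝ) T | t ≤ (s:ℝ)}).toReal
      - (ν {s : Set.Icc (0:ℝ) T | t ≤ (s:ℝ)}).toReal)]
  linarith


lemma norm_int_le {α : Type*} [MeasurableSpace α] (κ : Measure α) [IsProbabilityMeasure κ]
    {f : α → ℝ} {C : ℝ} (h : ∀ x, |f x| ≤ C) : |∫ x, f x ∂κ| ≤ C := by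
  have := norm_integral_le_of_norm_le_const (μ := κ) (f := f) (C := C)
    (ae_of_all _ fun x => by rw [Real.norm_eq_abs]; exact h x)
  simpa [Real.norm_eq_abs] using this

lemma integrable_double {f : Set.Icc (0:ℝ) T × Set.Icc (0:ℝ) T → ℝ} (hf : Continuous f)
    {C : ℝ} (hC : ∀ p, |f p| ≤ C)
    (κ lam : Measure (Set.Icc (0:ℝ) T)) [IsProbabilityMeasure κ] [IsProbabilityMeasure lam] :
    Integrable (fun s => ∫ s', f (s, s') ∂lam) κ := by
  refine integrable_of_bdd ?_ (C := C) ?_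
  · exact (hf.stronglyMeasurable.integral_prod_right').aestronglyMeasurable
  · intro s
    exact norm_int_le lam fun s' => hC (s, s')

lemma integrable_slice {f : Set.Icc (0:ℝ) T × Set.Icc (0:ℝ) T → ℝ} (hf : Continuous f)
    {C : ℝ} (hC : ∀ p, |f p| ≤ C) (s : Set.Icc (0:ℝ) T)
    (lam : Measure (Set.Icc (0:ℝ) T)) [IsProbabilityMeasure lam] :
    Integrable (fun s' => f (s, s')) lam :=
  integrable_of_bdd ((hf.comp (Continuous.prodMk_right s)).aestronglyMeasurable)
    (fun s' => hC (s, s'))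

lemma theta_sum {Θ : ℝ → ℝ} (hΘc : Continuous Θ)
    (hΘ0 : ∀ x : ℝ, 0 ≤ Θ x) (hΘ1 : ∀ x : ℝ, Θ x ≤ 1)
    (hΘsym : ∀ x : ℝ, Θ x + Θ (-x) = 1)
    (μ ν : Measure (Set.Icc (0:ℝ) T))
    [IsProbabilityMeasure μ] [IsProbabilityMeasure ν] :
    (∫ s, (∫ s', Θ ((s:ℝ) - (s':ℝ)) ∂ν) ∂μ)
      + (∫ s, (∫ s', Θ ((s:ℝ) - (s':ℝ)) ∂μ) ∂ν) = 1 := by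
  have hbd : ∀ x : ℝ, |Θ x| ≤ 1 := fun x => abs_le.mpr ⟨by linarith [hΘ0 x], hΘ1 x⟩
  have hc : Continuous fun p : Set.Icc (0:ℝ) T × Set.Icc (0:ℝ) T => Θ ((p.1:ℝ) - (p.2:ℝ)) :=
    hΘc.comp ((continuous_subtype_val.comp continuous_fst).sub
      (continuous_subtype_val.comp continuous_snd))
  have hc' : Continuous fun p : Set.Icc (0:ℝ) T × Set.Icc (0:ℝ) T => Θ ((p.2:ℝ) - (p.1:ℝ)) :=
    hΘc.comp ((continuous_subtype_val.comp continuous_snd).sub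
      (continuous_subtype_val.comp continuous_fst))
  have hswap : (∫ s, (∫ s', Θ ((s:ℝ) - (s':ℝ)) ∂μ) ∂ν)
      = ∫ s, (∫ s', Θ ((s':ℝ) - (s:ℝ)) ∂ν) ∂μ := by
    refine integral_integral_swap ?_
    refine integrable_of_bdd hc.aestronglyMeasurable (C := 1) fun p => hbd _
  rw [hswap]
  have hi1 := integrable_double (T := T) hc (fun p => hbd _) μ ν
  have hi2 := integrable_double (T := T) hc' (fun p => hbd _) μ ν
  rw [← integral_add hi1 hi2]
  have : ∀ s : Set.Icc (0:ℝ) T,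
      (∫ s', Θ ((s:ℝ) - (s':ℝ)) ∂ν) + (∫ s', Θ ((s':ℝ) - (s:ℝ)) ∂ν) = 1 := by
    intro s
    rw [← integral_add (integrable_slice (T := T) hc (fun p => hbd _) s ν)
      (integrable_slice (T := T) hc' (fun p => hbd _) s ν)]
    have h1 : ∀ s' : Set.Icc (0:ℝ) T,
        Θ ((s:ℝ) - (s':ℝ)) + Θ ((s':ℝ) - (s:ℝ)) = 1 := by
      intro s'
      have := hΘsym ((s:ℝ) - (s':ℝ))
      rwa [neg_sub] at this
    simp only [h1]
    simp
  simp only [this]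
  simp

end WarAux

open WarAux in
/-- The continuous war of attrition game on `S = [0,T]`, with payoff kernel
`f̃(s,s') = V·Θ̃(s-s') - min{s,s'}` for a Lipschitz continuous `Θ̃` satisfying
`0 ≤ Θ̃ ≤ 1` and `Θ̃(x) + Θ̃(-x) = 1`, is monotone. -/
theorem continuous_war_of_attrition_monotone (T V : ℝ) (hT : 0 < T)
    (Θ : ℝ → ℝ) (hΘlip : ∃ K : NNReal, LipschitzWith K Θ)
    (hΘ0 : ∀ x : ℝ, 0 ≤ Θ x) (hΘ1 : ∀ x : ℝ, Θ x ≤ 1)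
    (hΘsym : ∀ x : ℝ, Θ x + Θ (-x) = 1)
    (μ ν : Measure (Set.Icc (0 : ℝ) T))
    [IsProbabilityMeasure μ] [IsProbabilityMeasure ν] :
    (∫ s, (∫ s', (V * Θ ((s : ℝ) - (s' : ℝ)) - min (s : ℝ) (s' : ℝ)) ∂μ) ∂μ)
      - (∫ s, (∫ s', (V * Θ ((s : ℝ) - (s' : ℝ)) - min (s : ℝ) (s' : ℝ)) ∂ν) ∂μ)
      - (∫ s, (∫ s', (V * Θ ((s : ℝ) - (s' : ℝ)) - min (s : ℝ) (s' : ℝ)) ∂μ) ∂ν)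
      + (∫ s, (∫ s', (V * Θ ((s : ℝ) - (s' : ℝ)) - min (s : ℝ) (s' : ℝ)) ∂ν) ∂ν)
      ≤ 0 := by
  obtain ⟨K, hK⟩ := hΘlip
  have hΘc : Continuous Θ := hK.continuous
  have hbd : ∀ x : ℝ, |Θ x| ≤ 1 := fun x => abs_le.mpr ⟨by linarith [hΘ0 x], hΘ1 x⟩
  have hΘc2 : Continuous fun p : Set.Icc (0:ℝ) T × Set.Icc (0:ℝ) T =>
      Θ ((p.1:ℝ) - (p.2:ℝ)) :=
    hΘc.comp ((continuous_subtype_val.comp continuous_fst).sub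
      (continuous_subtype_val.comp continuous_snd))
  have hminc : Continuous fun p : Set.Icc (0:ℝ) T × Set.Icc (0:ℝ) T =>
      min (p.1:ℝ) (p.2:ℝ) :=
    Continuous.min (continuous_subtype_val.comp continuous_fst)
      (continuous_subtype_val.comp continuous_snd)
  have hbdmin : ∀ p : Set.Icc (0:ℝ) T × Set.Icc (0:ℝ) T, |min (p.1:ℝ) (p.2:ℝ)| ≤ T := by
    intro p
    rw [abs_of_nonneg (le_min p.1.2.1 p.2.2.1)]
    exact (min_le_left _ _).trans p.1.2.2
  have decomp : ∀ (κ lam : Measure (Set.Icc (0:ℝ) T)),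
      IsProbabilityMeasure κ → IsProbabilityMeasure lam →
      (∫ s, (∫ s', (V * Θ ((s:ℝ) - (s':ℝ)) - min (s:ℝ) (s':ℝ)) ∂lam) ∂κ)
        = V * (∫ s, (∫ s', Θ ((s:ℝ) - (s':ℝ)) ∂lam) ∂κ)
          - (∫ s, (∫ s', min (s:ℝ) (s':ℝ) ∂lam) ∂κ) := by
    intro κ lam hκ hlam
    have inner : ∀ s : Set.Icc (0:ℝ) T,
        (∫ s', (V * Θ ((s:ℝ) - (s':ℝ)) - min (s:ℝ) (s':ℝ)) ∂lam)
          = V * (∫ s', Θ ((s:ℝ) - (s':ℝ)) ∂lam) - (∫ s', min (s:ℝ) (s':ℝ) ∂lam) := by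
      intro s
      have a1 : (∫ s', (V * Θ ((s:ℝ) - (s':ℝ)) - min (s:ℝ) (s':ℝ)) ∂lam)
          = (∫ s', V * Θ ((s:ℝ) - (s':ℝ)) ∂lam) - (∫ s', min (s:ℝ) (s':ℝ) ∂lam) :=
        integral_sub ((integrable_slice hΘc2 (fun p => hbd _) s lam).const_mul V)
          (integrable_slice hminc hbdmin s lam)
      have a2 : (∫ s', V * Θ ((s:ℝ) - (s':ℝ)) ∂lam) = V * ∫ s', Θ ((s:ℝ) - (s':ℝ)) ∂lam :=
        integral_const_mul V _
      rw [a1, a2]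
    have step : (∫ s, (∫ s', (V * Θ ((s:ℝ) - (s':ℝ)) - min (s:ℝ) (s':ℝ)) ∂lam) ∂κ)
        = ∫ s, (V * (∫ s', Θ ((s:ℝ) - (s':ℝ)) ∂lam) - (∫ s', min (s:ℝ) (s':ℝ) ∂lam)) ∂κ :=
      integral_congr_ae (ae_of_all _ inner)
    have step2 : (∫ s, (V * (∫ s', Θ ((s:ℝ) - (s':ℝ)) ∂lam)
          - (∫ s', min (s:ℝ) (s':ℝ) ∂lam)) ∂κ)
        = (∫ s, V * (∫ s', Θ ((s:ℝ) - (s':ℝ)) ∂lam) ∂κ)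
          - (∫ s, (∫ s', min (s:ℝ) (s':ℝ) ∂lam) ∂κ) :=
      integral_sub ((integrable_double hΘc2 (fun p => hbd _) κ lam).const_mul V)
        (integrable_double hminc hbdmin κ lam)
    have step3 : (∫ s, V * (∫ s', Θ ((s:ℝ) - (s':ℝ)) ∂lam) ∂κ)
        = V * ∫ s, (∫ s', Θ ((s:ℝ) - (s':ℝ)) ∂lam) ∂κ := integral_const_mul V _
    rw [step, step2, step3]
  rw [decomp μ μ inferInstance inferInstance, decomp μ ν inferInstance inferInstance,
    decomp ν μ inferInstance inferInstance, decomp ν ν inferInstance inferInstance]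
  have t1 := theta_sum (T := T) hΘc hΘ0 hΘ1 hΘsym μ μ
  have t2 := theta_sum (T := T) hΘc hΘ0 hΘ1 hΘsym μ ν
  have t3 := theta_sum (T := T) hΘc hΘ0 hΘ1 hΘsym ν ν
  have m := min_comb hT.le μ ν
  have hA : (∫ s, (∫ s', Θ ((s:ℝ) - (s':ℝ)) ∂μ) ∂μ)
      - (∫ s, (∫ s', Θ ((s:ℝ) - (s':ℝ)) ∂ν) ∂μ)
      - (∫ s, (∫ s', Θ ((s:ℝ) - (s':ℝ)) ∂μ) ∂ν)
      + (∫ s, (∫ s', Θ ((s:ℝ) - (s':ℝ)) ∂ν) ∂ν) = 0 := by linarith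
  have hexp : V * (∫ s, (∫ s', Θ ((s:ℝ) - (s':ℝ)) ∂μ) ∂μ)
      - V * (∫ s, (∫ s', Θ ((s:ℝ) - (s':ℝ)) ∂ν) ∂μ)
      - V * (∫ s, (∫ s', Θ ((s:ℝ) - (s':ℝ)) ∂μ) ∂ν)
      + V * (∫ s, (∫ s', Θ ((s:ℝ) - (s':ℝ)) ∂ν) ∂ν) = 0 := by
    linear_combination V * hA
  linarith
end
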